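/- For the complex five-dimensional system with real A_1, A_2 and A_{1,2} = A_1 - A_2, the real quantity U_c = A_1(|ω_1|^2 + |ω_4|^2) + A_2(|ω_2|^2 + |ω_3|^2) is conserved along solutions. -/

import Mathlib

/-!
Since `d/dt |ω|² = 2 Re (ω' · conj ω)`, the derivative of `U_c` is a real-linear combination of
real parts of cubic monomials in `ω₁, …, ω₄, ωp` and their conjugates. With the given right-hand
sides these monomials cancel in pairs `z`, `-conj z`, so the derivative vanishes identically.
-/

open ComplexConjugate

theorem HasDerivAt.complex_normSq {f : ℝ → ℂ} {f' : ℂ} {t : ℝ} (hf : HasDerivAt f f' t) :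
    HasDerivAt (fun s => Complex.normSq (f s)) (2 * (f' * conj (f t)).re) t := by
  simpa only [Complex.sq_norm, Complex.inner] using hf.norm_sq

theorem Uc_rate_eq_zero (w₁ w₂ w₃ w₄ p : ℂ) (A₁ A₂ : ℝ) :
    A₁ * ((-A₂ * conj p * w₂ * conj w₁).re + (A₂ * p * w₃ * conj w₄).re)
      + A₂ * (((A₁ * p * w₁ - A₂ * conj p * w₃) * conj w₂).re
        + ((A₂ * p * w₂ - A₁ * conj p * w₄) * conj w₃).re) = 0 := by
  simp only [Complex.mul_re, Complex.sub_re, Complex.sub_im, Complex.mul_im, Complex.neg_re,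
    Complex.neg_im, Complex.conj_re, Complex.conj_im, Complex.ofReal_re, Complex.ofReal_im]
  ring

theorem Uc_invariant_general (ω₁ ω₂ ω₃ ω₄ ωp : ℝ → ℂ) (A₁ A₂ : ℝ)
    (h₁ : ∀ t, HasDerivAt ω₁ (-(A₂ : ℂ) * (starRingEnd ℂ) (ωp t) * ω₂ t) t)
    (h₂ : ∀ t, HasDerivAt ω₂
      ((A₁ : ℂ) * ωp t * ω₁ t - (A₂ : ℂ) * (starRingEnd ℂ) (ωp t) * ω₃ t) t)
    (h₃ : ∀ t, HasDerivAt ω₃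
      ((A₂ : ℂ) * ωp t * ω₂ t - (A₁ : ℂ) * (starRingEnd ℂ) (ωp t) * ω₄ t) t)
    (h₄ : ∀ t, HasDerivAt ω₄ ((A₂ : ℂ) * ωp t * ω₃ t) t) :
    ∀ t, HasDerivAt
      (fun t => A₁ * (Complex.normSq (ω₁ t) + Complex.normSq (ω₄ t))
        + A₂ * (Complex.normSq (ω₂ t) + Complex.normSq (ω₃ t))) (0 : ℝ) t := by
  intro t
  have hU := (((h₁ t).complex_normSq.add (h₄ t).complex_normSq).const_mul A₁).add
    (((h₂ t).complex_normSq.add (h₃ t).complex_normSq).const_mul A₂)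
  refine hU.congr_deriv ?_
  linear_combination 2 * Uc_rate_eq_zero (ω₁ t) (ω₂ t) (ω₃ t) (ω₄ t) (ωp t) A₁ A₂

/-- For the complex five-dimensional system with real `A₁, A₂` and `A₁₂ = A₁ - A₂`, the
real quantity `U_c = A₁(|ω₁|² + |ω₄|²) + A₂(|ω₂|² + |ω₃|²)` is conserved. -/
theorem Uc_invariant (ω₁ ω₂ ω₃ ω₄ ωp : ℝ → ℂ) (A₁ A₂ A₁₂ : ℝ) (hA₁₂ : A₁₂ = A₁ - A₂)
    (h₁ : ∀ t, HasDerivAt ω₁ (-(A₂ : ℂ) * (starRingEnd ℂ) (ωp t) * ω₂ t) t)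
    (h₂ : ∀ t, HasDerivAt ω₂
      ((A₁ : ℂ) * ωp t * ω₁ t - (A₂ : ℂ) * (starRingEnd ℂ) (ωp t) * ω₃ t) t)
    (h₃ : ∀ t, HasDerivAt ω₃
      ((A₂ : ℂ) * ωp t * ω₂ t - (A₁ : ℂ) * (starRingEnd ℂ) (ωp t) * ω₄ t) t)
    (h₄ : ∀ t, HasDerivAt ω₄ ((A₂ : ℂ) * ωp t * ω₃ t) t)
    (hp : ∀ t, HasDerivAt ωp
      ((A₁₂ : ℂ) * ((starRingEnd ℂ) (ω₃ t) * ω₄ t - (starRingEnd ℂ) (ω₁ t) * ω₂ t)) t) :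
    ∀ t, HasDerivAt
      (fun t => A₁ * (Complex.normSq (ω₁ t) + Complex.normSq (ω₄ t))
        + A₂ * (Complex.normSq (ω₂ t) + Complex.normSq (ω₃ t))) (0 : ℝ) t :=
  Uc_invariant_general ω₁ ω₂ ω₃ ω₄ ωp A₁ A₂ h₁ h₂ h₃ h₄
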